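/- Let H > 0, σ_H > 0, σ_g > 0, η > 0 with κ = H/(η σ_H). Define L(w) = L* + (H/2)(w - w*)², g(w) = L'(w) = H(w - w*), C(w) = σ_g + (2σ_H/H)(L(w) - L*), and p(w) = (1 + (2σ_H/(H σ_g))(L(w) - L*))^{-κ}. Then p satisfies the stationary Fokker–Planck equation: d/dw [ g(w) p(w) + (η/2) C(w) p'(w) ] = 0; in fact g(w) p(w) + (η/2) C(w) p'(w) = 0 for all w. -/

import Mathlib

/-! Writing `B w = 1 + (σH/σg)(w - w*)²`, the diffusion is `C = σg B` and the density is
`p = B^(-κ)`, so `B p' = -κ B' p` with `B' = 2 (σH/σg)(w - w*)`. The current therefore equals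
`(H - η σH κ)(w - w*) p`, which vanishes exactly for `κ = H / (η σH)`. -/

theorem HasDerivAt.mul_deriv_rpow_const {f : ℝ → ℝ} {f' w : ℝ} (hf : HasDerivAt f f' w)
    (hfw : f w ≠ 0) (r : ℝ) :
    f w * _root_.deriv (fun v => f v ^ r) w = r * f' * f w ^ r := by
  rw [(hf.rpow_const (Or.inl hfw)).deriv, Real.rpow_sub_one hfw]
  field_simp

theorem hasDerivAt_one_add_mul_sub_sq (a c w : ℝ) :
    HasDerivAt (fun v => 1 + a * (v - c) ^ 2) (a * (2 * (w - c))) w := by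
  simpa using ((((hasDerivAt_id w).sub_const c).fun_pow 2).const_mul a).const_add 1

/-- the power-law density satisfies the stationary Fokker–Planck equation:
the probability current `g·p + (η/2) C p'` vanishes identically (hence its derivative
also vanishes). -/
theorem powerlaw_stationary_fokker_planck
    (H σH σg η κ Lstar wstar : ℝ)
    (hH : 0 < H) (hσH : 0 < σH) (hσg : 0 < σg) (hη : 0 < η)
    (hκ : κ = H / (η * σH))
    (L g C p : ℝ → ℝ)
    (hL : ∀ w, L w = Lstar + H / 2 * (w - wstar) ^ 2)
    (hg : ∀ w, g w = H * (w - wstar))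
    (hC : ∀ w, C w = σg + 2 * σH / H * (L w - Lstar))
    (hp : ∀ w, p w = (1 + 2 * σH / (H * σg) * (L w - Lstar)) ^ (-κ)) :
    (∀ w, g w * p w + η / 2 * C w * deriv p w = 0) ∧
    (∀ w, deriv (fun v => g v * p v + η / 2 * C v * deriv p v) w = 0) := by
  set B : ℝ → ℝ := fun v => 1 + σH / σg * (v - wstar) ^ 2 with hB
  have hB_pos : ∀ w, 0 < B w := fun w => by positivity
  have hp_B : p = fun v => B v ^ (-κ) := by
    funext v
    rw [hp, hL, hB]
    congr 1
    field_simp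
    ring
  have hC_B : ∀ w, C w = σg * B w := fun w => by
    rw [hC, hL, hB]
    field_simp
    ring
  have current : ∀ w, g w * p w + η / 2 * C w * deriv p w = 0 := fun w => by
    have hpow : B w * deriv (fun v => B v ^ (-κ)) w =
        -κ * (σH / σg * (2 * (w - wstar))) * B w ^ (-κ) :=
      (hasDerivAt_one_add_mul_sub_sq (σH / σg) wstar w).mul_deriv_rpow_const (hB_pos w).ne' (-κ)
    calc g w * p w + η / 2 * C w * deriv p w
        = H * (w - wstar) * p w + η / 2 * σg * (B w * deriv p w) := by rw [hg, hC_B]; ring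
      _ = (H - η * σH * κ) * (w - wstar) * p w := by rw [hp_B, hpow]; field_simp; ring
      _ = 0 := by rw [hκ]; field_simp; ring
  refine ⟨current, fun w => ?_⟩
  simp only [current, deriv_const']
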